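/- arXiv:math/0306295 — 2 statements merged into one kernel-verified Lean document; each statement's English description precedes it below -/
import Mathlib

section
/- Let V : ℝ³ → ℂ be a measurable function such that for every compact set K ⊆ ℝ³ with nonempty interior one has ∫_K |V(x)|² dx = ∞ (V is nowhere locally square-integrable). If u : ℝ³ → ℂ is continuous and the pointwise product V·u is square-integrable on ℝ³ with respect to Lebesgue measure, then u is identically zero. -/
/-!
If `u x₀ ≠ 0`, continuity gives a compact neighbourhood `K` of `x₀` on which `‖u‖ ≥ ‖u x₀‖ / 2`.
There `‖V‖ ≤ (2 / ‖u x₀‖) ‖V u‖`, so `V` inherits square-integrability on `K` from `V u`,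
contradicting the hypothesis on `V`.
-/

open MeasureTheory
open scoped NNReal ENNReal

namespace MeasureTheory

theorem MemLp.restrict_of_mul_of_le_norm {α 𝕜 : Type*} [MeasurableSpace α] [NormedDivisionRing 𝕜]
    {μ : Measure α} {p : ℝ≥0∞} {f g : α → 𝕜} {s : Set α} {δ : ℝ}
    (hfg : MemLp (fun x => f x * g x) p μ) (hf : AEStronglyMeasurable f μ)
    (hs : MeasurableSet s) (hδ : 0 < δ) (hg : ∀ x ∈ s, δ ≤ ‖g x‖) :
    MemLp f p (μ.restrict s) := by
  refine (hfg.restrict s).of_le_mul (c := δ⁻¹) hf.restrict (ae_restrict_of_forall_mem hs ?_)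
  intro x hx
  rw [norm_mul, le_inv_mul_iff₀ hδ, mul_comm]
  exact mul_le_mul_of_nonneg_left (hg x hx) (norm_nonneg _)

theorem MemLp.lintegral_nnnorm_sq_lt_top {α E : Type*} [MeasurableSpace α]
    [NormedAddCommGroup E] {μ : Measure α} {f : α → E} (hf : MemLp f 2 μ) :
    ∫⁻ x, (‖f x‖₊ : ℝ≥0∞) ^ 2 ∂μ < ⊤ := by
  simpa [ENNReal.rpow_two, enorm_eq_nnnorm] using
    lintegral_rpow_enorm_lt_top_of_eLpNorm_lt_top two_ne_zero ENNReal.ofNat_ne_top hf.2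

end MeasureTheory

theorem exists_isCompact_lt_norm_of_ne_zero {X F : Type*} [TopologicalSpace X]
    [LocallyCompactSpace X] [NormedAddCommGroup F] {u : X → F} (hu : Continuous u) {x₀ : X}
    (hx₀ : u x₀ ≠ 0) :
    ∃ K, IsCompact K ∧ x₀ ∈ interior K ∧ ∀ x ∈ K, ‖u x₀‖ / 2 < ‖u x‖ :=
  exists_compact_subset (isOpen_lt continuous_const (continuous_norm.comp hu))
    (half_lt_self (norm_pos_iff.mpr hx₀))

/-- If `V : ℝ³ → ℂ` is measurable and fails to be square-integrable on every compact set
with nonempty interior, then any continuous `u : ℝ³ → ℂ` with `V·u` square-integrable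
on `ℝ³` vanishes identically. -/
theorem continuous_eq_zero_of_mul_memLp_of_nowhere_locally_sq_integrable
    (V u : EuclideanSpace ℝ (Fin 3) → ℂ)
    (hV : Measurable V)
    (hVloc : ∀ K : Set (EuclideanSpace ℝ (Fin 3)), IsCompact K → (interior K).Nonempty →
      ∫⁻ x in K, (‖V x‖₊ : ENNReal) ^ 2 ∂(volume : Measure (EuclideanSpace ℝ (Fin 3))) = ⊤)
    (hu : Continuous u)
    (hVu : MemLp (fun x => V x * u x) 2 (volume : Measure (EuclideanSpace ℝ (Fin 3)))) :
    ∀ x, u x = 0 := by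
  by_contra! ⟨x₀, hx₀⟩
  obtain ⟨K, hK, hx₀K, hu_lower⟩ := exists_isCompact_lt_norm_of_ne_zero hu hx₀
  have hV_K : MemLp V 2 (volume.restrict K) :=
    hVu.restrict_of_mul_of_le_norm hV.aestronglyMeasurable hK.isClosed.measurableSet
      (half_pos (norm_pos_iff.mpr hx₀)) fun x hx => (hu_lower x hx).le
  exact hV_K.lintegral_nnnorm_sq_lt_top.ne (hVloc K hK ⟨x₀, hx₀K⟩)
end

section
/- Let H be a complex Hilbert space, let A and B be (possibly unbounded) linear operators defined on linear subspaces D(A) and D(B) of H respectively, let α ∈ [0, 1), and let β, β' > 0 be real numbers. Assume that for all u ∈ D(A): Re⟨Au, u⟩ ≥ 0 and |Im⟨Au, u⟩| ≤ β · (Re⟨Au, u⟩)^α, and that for all u ∈ D(B): Re⟨Bu, u⟩ ≥ 0 and |Im⟨Bu, u⟩| ≤ β' · (Re⟨Bu, u⟩)^α. Then for all u ∈ D(A) ∩ D(B): Re⟨Au + Bu, u⟩ ≥ 0 and |Im⟨Au + Bu, u⟩| ≤ 2 · max(β, β') · (Re⟨Au + Bu, u⟩)^α. -/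
/-! The numerical range of `A + B` at `u` is the sum of those of `A` and `B`. The region
`S_{α,β}` is monotone in `β`, and since `t ↦ t ^ α` is monotone for `α ≥ 0`, the sum of a point
of `S_{α,β}` and one of `S_{α,β'}` lies in `S_{α,β+β'} ⊆ S_{α, 2 max(β,β')}`. -/

def mcintoshRegion (α β : ℝ) : Set ℂ :=
  {z | 0 ≤ z.re ∧ |z.im| ≤ β * z.re ^ α}

theorem mcintoshRegion_mono {α β γ : ℝ} (h : β ≤ γ) :
    mcintoshRegion α β ⊆ mcintoshRegion α γ := fun _ ⟨hre, him⟩ =>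
  ⟨hre, him.trans (mul_le_mul_of_nonneg_right h (Real.rpow_nonneg hre α))⟩

theorem add_mem_mcintoshRegion {α β β' : ℝ} {z w : ℂ} (hα : 0 ≤ α) (hβ : 0 ≤ β) (hβ' : 0 ≤ β')
    (hz : z ∈ mcintoshRegion α β) (hw : w ∈ mcintoshRegion α β') :
    z + w ∈ mcintoshRegion α (β + β') := by
  obtain ⟨hz_re, hz_im⟩ := hz
  obtain ⟨hw_re, hw_im⟩ := hw
  refine ⟨by rw [Complex.add_re]; positivity, ?_⟩
  rw [Complex.add_re, Complex.add_im]
  calc |z.im + w.im| ≤ |z.im| + |w.im| := abs_add_le _ _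
    _ ≤ β * z.re ^ α + β' * w.re ^ α := add_le_add hz_im hw_im
    _ ≤ β * (z.re + w.re) ^ α + β' * (z.re + w.re) ^ α := by
        gcongr <;> linarith
    _ = (β + β') * (z.re + w.re) ^ α := by ring

theorem numerical_range_sum_mcintosh_sector_general
    {H : Type*} [NormedAddCommGroup H] [InnerProductSpace ℂ H]
    (DA DB : Submodule ℂ H) (A : DA →ₗ[ℂ] H) (B : DB →ₗ[ℂ] H)
    (α β β' : ℝ) (hα0 : 0 ≤ α) (hβ : 0 < β) (hβ' : 0 < β')
    (hA : ∀ u : DA, 0 ≤ (inner ℂ (A u) (u : H) : ℂ).re ∧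
      |(inner ℂ (A u) (u : H) : ℂ).im| ≤ β * (inner ℂ (A u) (u : H) : ℂ).re ^ α)
    (hB : ∀ u : DB, 0 ≤ (inner ℂ (B u) (u : H) : ℂ).re ∧
      |(inner ℂ (B u) (u : H) : ℂ).im| ≤ β' * (inner ℂ (B u) (u : H) : ℂ).re ^ α) :
    ∀ (u : H) (huA : u ∈ DA) (huB : u ∈ DB),
      0 ≤ (inner ℂ (A ⟨u, huA⟩ + B ⟨u, huB⟩) u : ℂ).re ∧
        |(inner ℂ (A ⟨u, huA⟩ + B ⟨u, huB⟩) u : ℂ).im| ≤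
          2 * max β β' * (inner ℂ (A ⟨u, huA⟩ + B ⟨u, huB⟩) u : ℂ).re ^ α := by
  intro u huA huB
  have hsum_le : β + β' ≤ 2 * max β β' := by linarith [le_max_left β β', le_max_right β β']
  rw [inner_add_left]
  exact mcintoshRegion_mono hsum_le
    (add_mem_mcintoshRegion hα0 hβ.le hβ'.le (hA ⟨u, huA⟩) (hB ⟨u, huB⟩))

/-- If the numerical ranges of `A` and `B` lie in the McIntosh-type regions
`S_{α,β} = {z : Re z ≥ 0, |Im z| ≤ β (Re z)^α}` and `S_{α,β'}` respectively,
then the numerical range of the algebraic sum `A + B` (on `D(A) ∩ D(B)`)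
lies in `S_{α, 2 max(β,β')}`. -/
theorem numerical_range_sum_mcintosh_sector
    {H : Type*} [NormedAddCommGroup H] [InnerProductSpace ℂ H] [CompleteSpace H]
    (DA DB : Submodule ℂ H) (A : DA →ₗ[ℂ] H) (B : DB →ₗ[ℂ] H)
    (α β β' : ℝ) (hα0 : 0 ≤ α) (hα1 : α < 1) (hβ : 0 < β) (hβ' : 0 < β')
    (hA : ∀ u : DA, 0 ≤ (inner ℂ (A u) (u : H) : ℂ).re ∧
      |(inner ℂ (A u) (u : H) : ℂ).im| ≤ β * (inner ℂ (A u) (u : H) : ℂ).re ^ α)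
    (hB : ∀ u : DB, 0 ≤ (inner ℂ (B u) (u : H) : ℂ).re ∧
      |(inner ℂ (B u) (u : H) : ℂ).im| ≤ β' * (inner ℂ (B u) (u : H) : ℂ).re ^ α) :
    ∀ (u : H) (huA : u ∈ DA) (huB : u ∈ DB),
      0 ≤ (inner ℂ (A ⟨u, huA⟩ + B ⟨u, huB⟩) u : ℂ).re ∧
        |(inner ℂ (A ⟨u, huA⟩ + B ⟨u, huB⟩) u : ℂ).im| ≤
          2 * max β β' * (inner ℂ (A ⟨u, huA⟩ + B ⟨u, huB⟩) u : ℂ).re ^ α :=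
  numerical_range_sum_mcintosh_sector_general DA DB A B α β β' hα0 hβ hβ' hA hB
end
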